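/- Let E be a complex vector space of dimension d with basis e_1,…,e_d, regarded as the natural representation of GL_d(ℂ), and let λ be a partition. Then the formal character of the GL_d(ℂ)-representation ∇^λ(E) ⊆ Sym^λ E equals the Schur polynomial s_λ(x_1,…,x_d). -/

import Mathlib

open scoped Classical

namespace Pleth

/-- A finitely supported function `f : ℕ → ℕ` is a partition when its values are weakly
decreasing.  Parts are indexed from `0`, so `f i` is the `(i+1)`-st part `λ_{i+1}`;
parts beyond the length of the partition are `0`. -/
def IsPartition (f : ℕ →₀ ℕ) : Prop := ∀ i j : ℕ, i ≤ j → f j ≤ f i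

/-- `f` is a partition of `n`. -/
def IsPartitionOf (f : ℕ →₀ ℕ) (n : ℕ) : Prop := IsPartition f ∧ f.sum (fun _ k => k) = n

/-- The multiset of (nonzero) parts of `f`. -/
def partsOf (f : ℕ →₀ ℕ) : Multiset ℕ := f.support.val.map f

/-- The rectangular partition `(v^r)` with `r` parts equal to `v`. -/
noncomputable def rect (r v : ℕ) : ℕ →₀ ℕ := (Finset.range r).sum fun i => Finsupp.single i v

/-- The dominance order on compositions:  `Dominates α β` means `α ⊵ β`. -/
def Dominates (α β : ℕ →₀ ℕ) : Prop :=
  ∀ k : ℕ, ∑ i ∈ Finset.range k, β i ≤ ∑ i ∈ Finset.range k, α i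

/-- The Young diagram of a (finitely supported) shape, with rows and columns indexed
from `0`: the cell `(i, j)` lies in row `i` and column `j`. -/
def cells (lam : ℕ →₀ ℕ) : Finset (ℕ × ℕ) :=
  (lam.support ×ˢ Finset.range (lam.support.sup lam)).filter fun p => p.2 < lam p.1

lemma mem_cells {lam : ℕ →₀ ℕ} {p : ℕ × ℕ} : p ∈ cells lam ↔ p.2 < lam p.1 := by
  constructor
  · exact fun h => (Finset.mem_filter.mp h).2
  · intro h
    exact Finset.mem_filter.mpr ⟨Finset.mem_product.mpr
      ⟨Finsupp.mem_support_iff.mpr (by omega),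
       Finset.mem_range.mpr (lt_of_lt_of_le h (Finset.le_sup (Finsupp.mem_support_iff.mpr (by omega))))⟩, h⟩

/-- The type of cells of the Young diagram of `lam`. -/
abbrev Cell (lam : ℕ →₀ ℕ) : Type := {p : ℕ × ℕ // p ∈ cells lam}

/-- A `lam`-tableau with entries in `B` is a function from the Young diagram of `lam` to `B`. -/
abbrev Tab (lam : ℕ →₀ ℕ) (B : Type*) : Type _ := Cell lam → B

/-- The rows of `t` are weakly increasing with respect to the relation `le`. -/
def RowsWeak (lam : ℕ →₀ ℕ) {B : Type*} (le : B → B → Prop) (t : Tab lam B) : Prop :=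
  ∀ p q : Cell lam, p.1.1 = q.1.1 → p.1.2 ≤ q.1.2 → le (t p) (t q)

/-- The columns of `t` are strictly increasing with respect to the relation `lt`. -/
def ColsStrict (lam : ℕ →₀ ℕ) {B : Type*} (lt : B → B → Prop) (t : Tab lam B) : Prop :=
  ∀ p q : Cell lam, p.1.2 = q.1.2 → p.1.1 < q.1.1 → lt (t p) (t q)

/-- A semistandard tableau: rows weakly increasing, columns strictly increasing. -/
def IsSemistd (lam : ℕ →₀ ℕ) {B : Type*} [LinearOrder B] (t : Tab lam B) : Prop :=
  RowsWeak lam (· ≤ ·) t ∧ ColsStrict lam (· < ·) t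

/-- The semistandard `lam`-tableaux with entries in `B`. -/
abbrev SSYT (lam : ℕ →₀ ℕ) (B : Type*) [LinearOrder B] : Type _ :=
  {t : Tab lam B // IsSemistd lam t}

/-- The coefficient of the monomial `x^α = x_0^{α 0} x_1^{α 1} ⋯` in the Schur function
`s_lam`, namely the number of semistandard `lam`-tableaux with entries in `ℕ`
(the entry `b` corresponding to the variable `x_b`) having exactly `α b` entries
equal to `b` for every `b`. -/
noncomputable def schurCoeff (lam α : ℕ →₀ ℕ) : ℕ :=
  Nat.card {t : Tab lam ℕ // IsSemistd lam t ∧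
    ∀ b : ℕ, α b = (Finset.univ.filter (fun p : Cell lam => t p = b)).card}

/-- The set of entries of column `j` of the tableau `t`. -/
noncomputable def colSet (lam : ℕ →₀ ℕ) {B : Type*} [LinearOrder B] (t : Tab lam B) (j : ℕ) :
    Finset B :=
  (Finset.univ.filter (fun p : Cell lam => p.1.2 = j)).image t

/-- The total order on (column-standard) tableaux:  `t < u` if and only if, in the rightmost
column in which `t` and `u` differ, the greatest entry not appearing in both columns lies
in `u`. -/
def tabLT (lam : ℕ →₀ ℕ) {B : Type*} [LinearOrder B] (t u : Tab lam B) : Prop :=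
  ∃ j : ℕ, colSet lam t j ≠ colSet lam u j ∧
    (∀ j' : ℕ, j < j' → colSet lam t j' = colSet lam u j') ∧
    ∃ m : B, m ∈ colSet lam u j ∧ m ∉ colSet lam t j ∧
      ∀ x : B, ((x ∈ colSet lam t j ∧ x ∉ colSet lam u j) ∨
                (x ∈ colSet lam u j ∧ x ∉ colSet lam t j)) → x ≤ m

def tabLE (lam : ℕ →₀ ℕ) {B : Type*} [LinearOrder B] (t u : Tab lam B) : Prop :=
  t = u ∨ tabLT lam t u

/-- A plethystic semistandard tableau of shape `mu^nu`: a `nu`-tableau whose entries are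
semistandard `mu`-tableaux, with rows weakly increasing and columns strictly increasing
with respect to the total order `tabLT` on semistandard `mu`-tableaux. -/
def IsPSSYT (mu nu : ℕ →₀ ℕ) {B : Type*} [LinearOrder B] (T : Tab nu (SSYT mu B)) : Prop :=
  RowsWeak nu (fun s s' => tabLE mu s.1 s'.1) T ∧
  ColsStrict nu (fun s s' => tabLT mu s.1 s'.1) T

/-- `T` has weight `α`: for every letter `b`, the total number of entries equal to `b`
among the `mu`-tableau entries of `T` is `α b`. -/
def HasWeight (mu nu : ℕ →₀ ℕ) {B : Type*} [LinearOrder B] (T : Tab nu (SSYT mu B))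
    (α : B → ℕ) : Prop :=
  ∀ b : B, α b = ∑ P : Cell nu,
    (Finset.univ.filter (fun p : Cell mu => (T P).1 p = b)).card

/-- The coefficient of the monomial `x^α` in the plethysm `s_nu ∘ s_mu`, namely the number
of plethystic semistandard tableaux of shape `mu^nu` and weight `α`. -/
noncomputable def plethCoeff (nu mu α : ℕ →₀ ℕ) : ℕ :=
  Nat.card {T : Tab nu (SSYT mu ℕ) // IsPSSYT mu nu T ∧ HasWeight mu nu T (fun b => α b)}

end Pleth

namespace Pleth

/-- The canonical index type for the basis of `Sym^lam V`, where `V` is free with basis `B`: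
one multiset of entries (of the right size) for each row of the Young diagram. -/
abbrev RowData (lam : ℕ →₀ ℕ) (B : Type*) : Type _ := (i : ℕ) → Sym B (lam i)

/-- A concrete model for `Sym^lam V = ⊗_i Sym^{lam_i} V`, where `V` is the free `K`-module
with basis `{v_b : b ∈ B}`:  the free `K`-module on the GL-tabloids, i.e. on `RowData lam B`. -/
abbrev SymMod (lam : ℕ →₀ ℕ) (B : Type*) (K : Type*) [Semiring K] : Type _ :=
  RowData lam B →₀ K

/-- The multisets of row entries of a tableau. -/
def rowData (lam : ℕ →₀ ℕ) {B : Type*} (t : Tab lam B) : RowData lam B := fun i =>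
  ⟨(Finset.range (lam i)).attach.val.map
      (fun j => t ⟨(i, j.1), mem_cells.mpr (Finset.mem_range.mp j.2)⟩), by rw [Multiset.card_map, ← Finset.card_def, Finset.card_attach, Finset.card_range]⟩

/-- The GL-tabloid `f(t) = ⊗_i ∏_j v_{t(i,j)} ∈ Sym^lam V`. -/
noncomputable def tabloid (K : Type*) [CommRing K] (lam : ℕ →₀ ℕ) {B : Type*}
    (t : Tab lam B) : SymMod lam B K :=
  Finsupp.single (rowData lam t) 1

/-- The place-permutation action: `(t σ) (x) = t (σ⁻¹ x)`. -/
def permTab (lam : ℕ →₀ ℕ) {B : Type*} (t : Tab lam B) (σ : Equiv.Perm (Cell lam)) :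
    Tab lam B := fun p => t (σ⁻¹ p)

/-- `σ` preserves each column of the Young diagram, i.e. `σ ∈ CPP(lam)`. -/
def ColPres (lam : ℕ →₀ ℕ) (σ : Equiv.Perm (Cell lam)) : Prop :=
  ∀ p : Cell lam, (σ p).1.2 = p.1.2

/-- The GL-polytabloid `F(t) = ∑_{σ ∈ CPP(lam)} sgn(σ) f(tσ)`. -/
noncomputable def polytabloid (K : Type*) [CommRing K] (lam : ℕ →₀ ℕ) {B : Type*}
    (t : Tab lam B) : SymMod lam B K :=
  ∑ σ : Equiv.Perm (Cell lam),
    if ColPres lam σ then ((Equiv.Perm.sign σ : ℤ) • tabloid K lam (permTab lam t σ)) else 0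

/-- `∇^lam (V)`: the `K`-submodule of `Sym^lam V` spanned by the GL-polytabloids. -/
noncomputable def nabla (K : Type*) [CommRing K] (lam : ℕ →₀ ℕ) (B : Type*) :
    Submodule K (SymMod lam B K) :=
  Submodule.span K (Set.range (fun t : Tab lam B => polytabloid K lam t))

/-- The number of entries `≤ b` in row `i` of `t`; as a function of `i` this is the
composition `t^{≤ b}`. -/
noncomputable def rowCountLe (lam : ℕ →₀ ℕ) {B : Type*} [LinearOrder B] (t : Tab lam B)
    (b : B) (i : ℕ) : ℕ :=
  (Finset.univ.filter (fun p : Cell lam => p.1.1 = i ∧ t p ≤ b)).card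

/-- The dominance order on (row-semistandard) tableaux of the same shape:
`t ⊵ u` iff `t^{≤b} ⊵ u^{≤b}` for every `b`. -/
def TabDom (lam : ℕ →₀ ℕ) {B : Type*} [LinearOrder B] (t u : Tab lam B) : Prop :=
  ∀ b : B, ∀ k : ℕ,
    ∑ i ∈ Finset.range k, rowCountLe lam u b i ≤ ∑ i ∈ Finset.range k, rowCountLe lam t b i

/-- `t̄`: the tableau obtained from `t` by sorting each row into weakly increasing order. -/
noncomputable def rowsort (lam : ℕ →₀ ℕ) {B : Type*} [LinearOrder B] (t : Tab lam B) :
    Tab lam B :=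
  fun p => (List.insertionSort (· ≤ ·) ((List.range (lam p.1.1)).attach.map
      (fun j => t ⟨(p.1.1, j.1), mem_cells.mpr (List.mem_range.mp j.2)⟩))).getD p.1.2 (t p)

end Pleth

namespace Pleth

/-- The number of entries equal to `b` in the GL-tabloid datum `r`. -/
noncomputable def rdCount (lam : ℕ →₀ ℕ) {B : Type*} (r : RowData lam B) (b : B) : ℕ :=
  ∑ᶠ i : ℕ, Multiset.count b (r i).1

/-- The action of the diagonal matrix with diagonal entries `z` on `Sym^lam E`, where
`E = ℂ^d`: the GL-tabloid basis vector indexed by `r` is scaled by `∏_b z_b^{(number of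
entries equal to b in r)}`. -/
noncomputable def diagActL (lam : ℕ →₀ ℕ) (d : ℕ) (z : Fin d → ℂ) :
    SymMod lam (Fin d) ℂ →ₗ[ℂ] SymMod lam (Fin d) ℂ :=
  Finsupp.lsum ℂ (fun r => (∏ b : Fin d, z b ^ rdCount lam r b) • Finsupp.lsingle r)

/-- The `β`-weight space of the representation `∇^lam (E)` of `GL_d(ℂ)`: the set of
`v ∈ ∇^lam (E)` with `g ⬝ v = g_{11}^{β 0} ⋯ g_{dd}^{β (d-1)} v` for every invertible
diagonal matrix `g`. -/
noncomputable def weightSpace (lam : ℕ →₀ ℕ) (d : ℕ) (β : Fin d → ℕ) :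
    Submodule ℂ (SymMod lam (Fin d) ℂ) :=
  nabla ℂ lam (Fin d) ⊓ ⨅ z : {z : Fin d → ℂ // ∀ i, z i ≠ 0},
    LinearMap.eqLocus (diagActL lam d z.1) ((∏ i : Fin d, z.1 i ^ β i) • LinearMap.id)

/-- The formal character `Φ_{∇^lam(E)}(x_0, …, x_{d-1}) = ∑_β dim (∇^lam(E))_β · x^β`. -/
noncomputable def formalChar (lam : ℕ →₀ ℕ) (d : ℕ) : MvPolynomial (Fin d) ℂ :=
  ∑ᶠ β : Fin d → ℕ, (Module.finrank ℂ ↥(weightSpace lam d β) : MvPolynomial (Fin d) ℂ) *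
    ∏ i : Fin d, MvPolynomial.X i ^ β i

/-- The Schur polynomial `s_lam (x_0, …, x_{d-1}) = ∑_t x^t`, the sum over all semistandard
`lam`-tableaux with entries from `{0, …, d-1}`. -/
noncomputable def schurPoly (lam : ℕ →₀ ℕ) (d : ℕ) : MvPolynomial (Fin d) ℂ :=
  ∑ t : Tab lam (Fin d),
    if IsSemistd lam t then ∏ p : Cell lam, MvPolynomial.X (t p) else 0

/-- The action of the elementary matrix `X^{(c)}` (with a single `1` in position
`(c-1, c)`) of `gl_d(K)` on `Sym^lam E`, described on the GL-tabloid basis: the entry `c`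
is lowered to `c - 1` in each possible row, with multiplicity. -/
noncomputable def lowerVec (K : Type*) [CommRing K] (lam : ℕ →₀ ℕ) {d : ℕ} (c : Fin d)
    (r : RowData lam (Fin d)) : SymMod lam (Fin d) K :=
  ∑ᶠ i : ℕ, if h : c ∈ (r i).1 then
    (Multiset.count c (r i).1 : K) • Finsupp.single (Function.update r i
      ⟨(⟨c.1 - 1, Nat.lt_of_le_of_lt (Nat.sub_le _ _) c.2⟩ : Fin d) ::ₘ (r i).1.erase c, by
        have h2 := (r i).2
        have h1 : 0 < Multiset.card (r i).1 := Multiset.card_pos_iff_exists_mem.mpr ⟨c, h⟩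
        rw [Multiset.card_cons, Multiset.card_erase_of_mem h, Nat.pred_eq_sub_one]
        omega⟩) (1 : K)
  else 0

/-- The action of `X^{(c)} ∈ gl_d(K)` on `Sym^lam E`, as a linear map. -/
noncomputable def lowerL (K : Type*) [CommRing K] (lam : ℕ →₀ ℕ) {d : ℕ} (c : Fin d) :
    SymMod lam (Fin d) K →ₗ[K] SymMod lam (Fin d) K :=
  Finsupp.lsum K (fun r => LinearMap.toSpanSingleton K _ (lowerVec K lam c r))

/-- The row-sorted tableau realizing a GL-tabloid datum `r`. -/
noncomputable def tabOf (lam : ℕ →₀ ℕ) {B : Type*} [LinearOrder B] (r : RowData lam B) :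
    Tab lam B :=
  fun p => (Multiset.sort (r p.1.1).1 (· ≤ ·)).get ⟨p.1.2, by
    rw [Multiset.length_sort, (r p.1.1).2]; exact mem_cells.mp p.2⟩

/-- The action of a matrix `g` on `Sym^lam E`, `E = K^d`, described on the GL-tabloid
basis by multilinear expansion of `g ⬝ f(t) = ⊗_i ∏_j (g v_{t(i,j)})`. -/
noncomputable def matActL (K : Type*) [CommRing K] (lam : ℕ →₀ ℕ) (d : ℕ)
    (g : Matrix (Fin d) (Fin d) K) : SymMod lam (Fin d) K →ₗ[K] SymMod lam (Fin d) K :=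
  Finsupp.lsum K (fun r => LinearMap.toSpanSingleton K _
    (∑ u : Tab lam (Fin d), (∏ p : Cell lam, g (u p) (tabOf lam r p)) • tabloid K lam u))

end Pleth

/-!
The polytabloids `F(u)` of the semistandard tableaux `u` form a basis of `∇^λ(E)`, and
`F(u)` is a weight vector whose weight is the content of `u`. Hence `dim ∇^λ(E)_β` is the
number of semistandard tableaux of content `β`, the coefficient of `x^β` in `s_λ`.

They span by straightening: a repeated entry in a column kills `F(t)`, a column descent is
undone by a column transposition at the cost of a sign, and a row descent is removed by a
Garnir relation. They are independent because the tabloid of a semistandard `u` is the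
unique term of `F(u)` of maximal row weight `∑ row · entry` (a rearrangement inequality),
and it determines `u`.
-/

theorem Equiv.Perm.sum_sign_smul_eq_zero_of_involution {α M : Type*} [DecidableEq α] [Fintype α]
    [AddCommGroup M] {s : Finset (Perm α)} (i : Perm α → Perm α) (hi : ∀ g ∈ s, i g ∈ s)
    (hii : ∀ g, i (i g) = g) (hsign : ∀ g, sign (i g) = -sign g) (f : Perm α → M)
    (hf : ∀ g ∈ s, f (i g) = f g) : ∑ g ∈ s, (sign g : ℤ) • f g = 0 :=
  Finset.sum_involution (fun g _ => i g)
    (fun g hg => by rw [hsign, hf g hg, Units.val_neg, neg_smul, add_neg_cancel])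
    (fun g _ _ h => units_ne_neg_self (sign g) (by rw [← hsign, h]))
    hi (fun g _ => hii g)

theorem Equiv.Perm.apply_mem_of_support_subset {α : Type*} [DecidableEq α] [Fintype α]
    {g : Perm α} {s : Finset α} (hg : g.support ⊆ s) {x : α} (hx : x ∈ s) : g x ∈ s := by
  by_cases hgx : g x = x
  · rwa [hgx]
  · exact hg (apply_mem_support.mpr (mem_support.mpr hgx))

theorem Fintype.sum_mul_comp_swap {ι R : Type*} [Fintype ι] [DecidableEq ι] [CommSemiring R]
    (f g : ι → R) {p q : ι} (hpq : p ≠ q) :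
    ∑ x, f x * g (Equiv.swap p q x) + (f p * g p + f q * g q) =
      ∑ x, f x * g x + (f p * g q + f q * g p) := by
  rw [← Finset.sum_add_sum_compl {p, q}, ← Finset.sum_add_sum_compl {p, q} (fun x => f x * g x),
    Finset.sum_pair hpq, Finset.sum_pair hpq, Equiv.swap_apply_left, Equiv.swap_apply_right]
  have : ∑ x ∈ ({p, q} : Finset ι)ᶜ, f x * g (Equiv.swap p q x) =
      ∑ x ∈ ({p, q} : Finset ι)ᶜ, f x * g x :=
    Finset.sum_congr rfl fun x hx => by
      rw [Equiv.swap_apply_of_ne_of_ne (by simp_all) (by simp_all)]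
  rw [this]
  ring

theorem Nat.add_mul_lt_add_mul_iff {a a' b b' R : ℕ} (ha : a < R) (ha' : a' < R) :
    a + b * R < a' + b' * R ↔ b < b' ∨ b = b' ∧ a < a' := by
  constructor
  · intro h
    rcases lt_trichotomy b b' with hb | rfl | hb
    · exact Or.inl hb
    · exact Or.inr ⟨rfl, by omega⟩
    · nlinarith
  · rintro (hb | ⟨rfl, h⟩)
    · nlinarith
    · omega

theorem Nat.eq_and_eq_of_add_mul_eq {a a' b b' R : ℕ} (ha : a < R) (ha' : a' < R)
    (h : a + b * R = a' + b' * R) : a = a' ∧ b = b' := by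
  have h₁ := mt (Nat.add_mul_lt_add_mul_iff ha ha').mpr h.not_lt
  have h₂ := mt (Nat.add_mul_lt_add_mul_iff ha' ha).mpr h.not_gt
  omega

theorem Monovary.eq_one_of_comp_perm {ι α β : Type*} [Fintype ι] [LinearOrder α]
    [LinearOrder β] {f : ι → α} {g : ι → β} (hf : Function.Injective f)
    (hg : Function.Injective g) (hfg : Monovary f g) {σ : Equiv.Perm ι}
    (hσ : Monovary (f ∘ σ) g) : σ = 1 := by
  by_contra h1
  obtain ⟨x, hx, hmax⟩ := (Finset.univ.filter fun x => σ x ≠ x).exists_max_image g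
    (Finset.filter_nonempty_iff.mpr (by simpa [Equiv.Perm.ext_iff] using h1))
  have hx : σ x ≠ x := (Finset.mem_filter.mp hx).2
  have hσx : g (σ x) < g x := (hmax _ (Finset.mem_filter.mpr ⟨Finset.mem_univ _,
    fun h => hx (σ.injective h)⟩)).lt_of_ne (hg.ne hx)
  have hix : σ⁻¹ x ≠ x := fun h => hx (Equiv.Perm.inv_eq_iff_eq.mp h).symm
  have hσix : g (σ⁻¹ x) < g x := (hmax _ (Finset.mem_filter.mpr ⟨Finset.mem_univ _,
    fun h => hix (by simpa using h.symm)⟩)).lt_of_ne (hg.ne hix)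
  have h := hσ hσix
  rw [Function.comp_apply, Function.comp_apply, ← Equiv.Perm.mul_apply, mul_inv_cancel,
    Equiv.Perm.one_apply] at h
  exact hx (hf ((hfg hσx).antisymm h))

theorem linearIndependent_of_leading {ι α β R : Type*} [CommRing R] [LinearOrder β]
    (v : ι → α →₀ R) (ℓ : ι → α) (W : α → β) (hℓ : Function.Injective ℓ)
    (hlead : ∀ i, IsUnit (v i (ℓ i)))
    (hlow : ∀ i a, v i a ≠ 0 → a ≠ ℓ i → W a < W (ℓ i)) :
    LinearIndependent R v := by
  rw [linearIndependent_iff]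
  intro c hc
  by_contra hne
  obtain ⟨i₀, hi₀, hmax⟩ :=
    c.support.exists_max_image (fun i => W (ℓ i)) (Finsupp.support_nonempty_iff.mpr hne)
  have hcoef : Finsupp.linearCombination R v c (ℓ i₀) = c i₀ * v i₀ (ℓ i₀) := by
    rw [Finsupp.linearCombination_apply, Finsupp.sum, Finset.sum_apply', Finset.sum_eq_single i₀]
    · rfl
    · intro i hi hii₀
      have : v i (ℓ i₀) = 0 := by_contra fun h =>
        (hmax i hi).not_gt (hlow i _ h (hℓ.ne (Ne.symm hii₀)))
      rw [Finsupp.smul_apply, this, smul_zero]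
    · exact fun h => absurd hi₀ h
  rw [hc, Finsupp.zero_apply, eq_comm, (hlead i₀).mul_left_eq_zero] at hcoef
  exact Finsupp.mem_support_iff.mp hi₀ hcoef

namespace Pleth

open Finset Equiv

variable {lam : ℕ →₀ ℕ} {B : Type*}

lemma cell_ext {p q : Cell lam} (h1 : p.1.1 = q.1.1) (h2 : p.1.2 = q.1.2) : p = q :=
  Subtype.ext (Prod.ext h1 h2)

noncomputable def content (t : Tab lam B) (b : B) : ℕ := #{p | t p = b}

lemma content_permTab (t : Tab lam B) (σ : Perm (Cell lam)) :
    content (permTab lam t σ) = content t := by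
  funext b
  exact card_equiv σ.symm (fun p => by rw [mem_filter, mem_filter]; simp [permTab])

lemma prod_comp_eq_prod_pow_content {M : Type*} [CommMonoid M] [Fintype B] (f : B → M)
    (t : Tab lam B) : ∏ p, f (t p) = ∏ b, f b ^ content t b := by
  rw [← prod_fiberwise univ t fun p => f (t p)]
  refine prod_congr rfl fun b _ => ?_
  rw [prod_congr rfl fun p hp => by rw [(mem_filter.mp hp).2], prod_const]
  rfl

lemma rowData_eq (t : Tab lam B) (i : ℕ) :
    (rowData lam t i).1 = (univ.filter fun p : Cell lam => p.1.1 = i).val.map t := by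
  let cell : {j // j ∈ range (lam i)} ↪ Cell lam :=
    ⟨fun j => ⟨(i, j.1), mem_cells.mpr (mem_range.mp j.2)⟩, fun a b h => by
      simpa using congrArg (fun c : Cell lam => c.1.2) h⟩
  have hrow : (range (lam i)).attach.map cell = univ.filter fun p : Cell lam => p.1.1 = i := by
    ext p
    simp only [mem_map, mem_attach, true_and, mem_filter, mem_univ]
    constructor
    · rintro ⟨j, rfl⟩; rfl
    · rintro rfl
      exact ⟨⟨p.1.2, mem_range.mpr (mem_cells.mp p.2)⟩, cell_ext rfl rfl⟩
  rw [← hrow, map_val, Multiset.map_map]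
  rfl

lemma countP_rowData (t : Tab lam B) (P : B → Prop) [DecidablePred P] (i : ℕ) :
    (rowData lam t i).1.countP P = #{c : Cell lam | c.1.1 = i ∧ P (t c)} := by
  rw [rowData_eq, Multiset.countP_map, ← filter_val, filter_filter, card_val]

lemma rdCount_rowData (t : Tab lam B) : rdCount lam (rowData lam t) = content t := by
  funext b
  have hcount : ∀ i, Multiset.count b (rowData lam t i).1 = #{p | t p = b ∧ p.1.1 = i} := by
    intro i
    rw [Multiset.count, countP_rowData]
    simp_rw [eq_comm (a := b), and_comm]
  have hsupp : (Function.support fun i => Multiset.count b (rowData lam t i).1) ⊆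
      ((univ.filter fun p : Cell lam => t p = b).image fun p => p.1.1 : Finset ℕ) := by
    intro i hi
    rw [Function.mem_support, hcount] at hi
    obtain ⟨p, hp⟩ := card_ne_zero.mp hi
    simp only [mem_filter, mem_univ, true_and] at hp
    exact mem_image.mpr ⟨p, by simpa using hp.1, hp.2⟩
  rw [rdCount, finsum_eq_sum_of_support_subset _ hsupp, content,
    card_eq_sum_card_image (fun p : Cell lam => p.1.1)]
  simp_rw [hcount, filter_filter]

section RowsWeak

variable [LinearOrder B] {t : Tab lam B}

lemma col_lt_card_of_le (ht : RowsWeak lam (· ≤ ·) t) {p : Cell lam} {v : B} (hv : t p ≤ v) :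
    p.1.2 < #{c : Cell lam | c.1.1 = p.1.1 ∧ t c ≤ v} := by
  refine Nat.lt_of_succ_le ((card_range _).ge.trans ((card_le_card fun j hj => ?_).trans
    (card_image_le (f := fun c : Cell lam => c.1.2))))
  have hj : j ≤ p.1.2 := Nat.lt_succ_iff.mp (mem_range.mp hj)
  have hcell : (p.1.1, j) ∈ cells lam := mem_cells.mpr (hj.trans_lt (mem_cells.mp p.2))
  exact mem_image.mpr ⟨⟨_, hcell⟩, mem_filter.mpr ⟨mem_univ _, rfl,
    (ht ⟨_, hcell⟩ p rfl hj).trans hv⟩, rfl⟩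

lemma card_le_col_of_lt (ht : RowsWeak lam (· ≤ ·) t) {p : Cell lam} {v : B} (hv : v < t p) :
    #{c : Cell lam | c.1.1 = p.1.1 ∧ t c ≤ v} ≤ p.1.2 := by
  refine (card_le_card_of_injOn (fun c : Cell lam => c.1.2) (fun c hc => ?_)
    fun a ha b hb hab => ?_).trans (card_range _).le
  · obtain ⟨hrow, hc⟩ := (mem_filter.mp hc).2
    exact mem_range.mpr (not_le.mp fun h => (hv.trans_le ((ht p c hrow.symm h))).not_ge hc)
  · exact cell_ext ((mem_filter.mp ha).2.1.trans (mem_filter.mp hb).2.1.symm) hab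

lemma le_iff_col_lt_countP (ht : RowsWeak lam (· ≤ ·) t) (p : Cell lam) (v : B) :
    t p ≤ v ↔ p.1.2 < (rowData lam t p.1.1).1.countP (· ≤ v) := by
  rw [countP_rowData]
  exact ⟨col_lt_card_of_le ht, fun h => not_lt.mp fun hv => (card_le_col_of_lt ht hv).not_gt h⟩

lemma eq_of_rowData_eq {t' : Tab lam B} (ht : RowsWeak lam (· ≤ ·) t)
    (ht' : RowsWeak lam (· ≤ ·) t') (h : rowData lam t = rowData lam t') : t = t' :=
  funext fun p => le_antisymm
    ((le_iff_col_lt_countP ht p _).mpr (h ▸ (le_iff_col_lt_countP ht' p _).mp le_rfl))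
    ((le_iff_col_lt_countP ht' p _).mpr (h ▸ (le_iff_col_lt_countP ht p _).mp le_rfl))

end RowsWeak

lemma permTab_permTab (t : Tab lam B) (a b : Perm (Cell lam)) :
    permTab lam (permTab lam t a) b = permTab lam t (b * a) := by
  funext p; simp [permTab, mul_inv_rev]

lemma permTab_one (t : Tab lam B) : permTab lam t 1 = t := rfl

lemma colPres_mul {a b : Perm (Cell lam)} (ha : ColPres lam a) (hb : ColPres lam b) :
    ColPres lam (a * b) := fun p => (ha (b p)).trans (hb p)

lemma colPres_inv {a : Perm (Cell lam)} (ha : ColPres lam a) : ColPres lam a⁻¹ := fun p => by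
  simpa using (ha (a⁻¹ p)).symm

lemma colPres_swap {p q : Cell lam} (h : p.1.2 = q.1.2) : ColPres lam (swap p q) :=
  apply_swap_eq_self (v := fun c : Cell lam => c.1.2) h

lemma eq_of_colPres_of_row_eq {σ : Perm (Cell lam)} (hσ : ColPres lam σ) {a b : Cell lam}
    (hcol : a.1.2 = b.1.2) (hrow : (σ a).1.1 = (σ b).1.1) : a = b :=
  σ.injective (cell_ext hrow (by rw [hσ, hσ, hcol]))

lemma tabloid_permTab_of_rowPres (K : Type*) [CommRing K] (t : Tab lam B)
    {σ : Perm (Cell lam)} (hσ : ∀ x, (σ x).1.1 = x.1.1) :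
    tabloid K lam (permTab lam t σ) = tabloid K lam t := by
  have hrow : ∀ i, (univ.filter fun p : Cell lam => p.1.1 = i).map σ⁻¹.toEmbedding =
      univ.filter fun p : Cell lam => p.1.1 = i := fun i => by
    ext x
    rw [mem_map_equiv, mem_filter, mem_filter]
    simp only [mem_univ, true_and]
    change (σ x).1.1 = i ↔ _
    rw [hσ]
  unfold tabloid
  congr 1
  funext i
  apply Subtype.ext
  rw [rowData_eq, rowData_eq]
  conv_rhs => rw [← hrow i, map_val, Multiset.map_map]
  rfl

lemma polytabloid_eq_sum (K : Type*) [CommRing K] (t : Tab lam B) :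
    polytabloid K lam t = ∑ σ ∈ univ.filter (ColPres lam),
      (Perm.sign σ : ℤ) • tabloid K lam (permTab lam t σ) :=
  (sum_filter _ _).symm

lemma polytabloid_apply (K : Type*) [CommRing K] (t : Tab lam B) (r : RowData lam B) :
    polytabloid K lam t r = ∑ σ ∈ univ.filter (fun σ => ColPres lam σ ∧
      rowData lam (permTab lam t σ) = r), (Perm.sign σ : K) := by
  rw [polytabloid_eq_sum, Finsupp.finsetSum_apply]
  conv_rhs => rw [← filter_filter, sum_filter]
  refine sum_congr rfl fun σ _ => ?_
  rw [Finsupp.smul_apply, tabloid, Finsupp.single_apply]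
  split_ifs <;> simp

lemma polytabloid_apply_eq_zero {K : Type*} [CommRing K] {t : Tab lam B} {r : RowData lam B}
    (hr : rdCount lam r ≠ content t) : polytabloid K lam t r = 0 := by
  rw [polytabloid_apply]
  refine sum_eq_zero fun σ hσ => absurd ?_ hr
  rw [← (mem_filter.mp hσ).2.2, rdCount_rowData, content_permTab]

lemma polytabloid_permTab (K : Type*) [CommRing K] (t : Tab lam B) {τ : Perm (Cell lam)}
    (hτ : ColPres lam τ) :
    polytabloid K lam (permTab lam t τ) = (Perm.sign τ : ℤ) • polytabloid K lam t := by
  rw [polytabloid, polytabloid, smul_sum]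
  conv_rhs => rw [← Equiv.sum_comp (Equiv.mulRight τ)]
  refine sum_congr rfl fun σ _ => ?_
  have hcp : ColPres lam (σ * τ) ↔ ColPres lam σ :=
    ⟨fun h => by simpa using colPres_mul h (colPres_inv hτ), fun h => colPres_mul h hτ⟩
  simp only [coe_mulRight, hcp, permTab_permTab]
  split_ifs
  · rw [smul_smul, Perm.sign_mul, Units.val_mul, mul_left_comm, ← Units.val_mul,
      Int.units_mul_self, Units.val_one, mul_one]
  · rw [smul_zero]

lemma polytabloid_eq_zero_of_eq (K : Type*) [CommRing K] (t : Tab lam B) {p q : Cell lam}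
    (hpq : p ≠ q) (hcol : p.1.2 = q.1.2) (hval : t p = t q) : polytabloid K lam t = 0 := by
  have ht : permTab lam t (swap p q) = t := funext (apply_swap_eq_self hval)
  rw [polytabloid_eq_sum]
  refine Perm.sum_sign_smul_eq_zero_of_involution (· * swap p q) (fun σ hσ => ?_)
    (fun σ => by simp [mul_assoc]) (fun σ => by simp [Perm.sign_swap hpq]) _ (fun σ _ => ?_)
  · simpa using colPres_mul (mem_filter.mp hσ).2 (colPres_swap hcol)
  · rw [← permTab_permTab, ht]

noncomputable def colBelow (p : Cell lam) : Finset (Cell lam) :=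
  univ.filter fun c => c.1.2 = p.1.2 ∧ p.1.1 ≤ c.1.1

noncomputable def colAbove (q : Cell lam) : Finset (Cell lam) :=
  univ.filter fun c => c.1.2 = q.1.2 ∧ c.1.1 ≤ q.1.1

lemma row_add_one_le_card_colAbove (hlam : IsPartition lam) (q : Cell lam) :
    q.1.1 + 1 ≤ #(colAbove q) := by
  refine (card_range _).ge.trans ((card_le_card fun r hr => ?_).trans
    (card_image_le (f := fun c : Cell lam => c.1.1)))
  have hri : r ≤ q.1.1 := Nat.lt_succ_iff.mp (mem_range.mp hr)
  have hcell : (r, q.1.2) ∈ cells lam :=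
    mem_cells.mpr ((mem_cells.mp q.2).trans_le (hlam r _ hri))
  exact mem_image.mpr ⟨⟨_, hcell⟩, by simp [colAbove, hri], rfl⟩

/-- Pigeonhole: column `p.1.2` has fewer rows than `colBelow p` and `colAbove q` have cells
together. -/
lemma exists_row_eq_of_colPres (hlam : IsPartition lam) {p q : Cell lam} (hrow : p.1.1 = q.1.1)
    (hcol : p.1.2 < q.1.2) {σ : Perm (Cell lam)} (hσ : ColPres lam σ) :
    ∃ a ∈ colBelow p, ∃ b ∈ colAbove q, (σ a).1.1 = (σ b).1.1 := by
  set T : Finset ℕ := lam.support.filter fun r => p.1.2 < lam r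
  have hT : ∀ r, r ∈ T ↔ p.1.2 < lam r := fun r => by
    simp only [T, mem_filter, Finsupp.mem_support_iff]
    exact ⟨And.right, fun h => ⟨by omega, h⟩⟩
  have hA : #T ≤ #(colBelow p) + p.1.1 := by
    rw [← card_filter_add_card_filter_not (p := (p.1.1 ≤ ·))]
    gcongr
    · refine (card_le_card fun r hr => ?_).trans (card_image_le (f := fun c : Cell lam => c.1.1))
      obtain ⟨hrT, hir⟩ := mem_filter.mp hr
      exact mem_image.mpr ⟨⟨(r, p.1.2), mem_cells.mpr ((hT r).mp hrT)⟩,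
        by simpa [colBelow] using hir, rfl⟩
    · exact (card_le_card fun r hr => mem_range.mpr (not_le.mp (mem_filter.mp hr).2)).trans
        (card_range _).le
  have hdisj : Disjoint (colBelow p) (colAbove q) := disjoint_filter.mpr fun c _ hc hc' => by
    omega
  have hmaps : Set.MapsTo (fun c => (σ c).1.1) ↑(colBelow p ∪ colAbove q) ↑T := by
    intro c hc
    have hc' : p.1.2 ≤ c.1.2 := by
      rcases mem_union.mp hc with h | h <;> simp only [colBelow, colAbove, mem_filter] at h <;>
        omega
    have := mem_cells.mp (σ c).2
    rw [hσ] at this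
    exact (hT _).mpr (by simp only at this ⊢; omega)
  obtain ⟨a, ha, b, hb, hab, heq⟩ := exists_ne_map_eq_of_card_lt_of_maps_to
    (by have := row_add_one_le_card_colAbove hlam q; rw [card_union_of_disjoint hdisj]; omega)
    hmaps
  have hcolA : ∀ c ∈ colBelow p, c.1.2 = p.1.2 := fun c hc => (mem_filter.mp hc).2.1
  have hcolB : ∀ c ∈ colAbove q, c.1.2 = q.1.2 := fun c hc => (mem_filter.mp hc).2.1
  rcases mem_union.mp ha with ha | ha <;> rcases mem_union.mp hb with hb | hb
  · exact absurd (eq_of_colPres_of_row_eq hσ ((hcolA a ha).trans (hcolA b hb).symm) heq) hab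
  · exact ⟨a, ha, b, hb, heq⟩
  · exact ⟨b, hb, a, ha, heq.symm⟩
  · exact absurd (eq_of_colPres_of_row_eq hσ ((hcolB a ha).trans (hcolB b hb).symm) heq) hab

/-- The Garnir relation: for each column-preserving `σ`, the terms `g` and `swap a b * g`
of the expanded sum cancel. -/
lemma sum_sign_smul_polytabloid_eq_zero (K : Type*) [CommRing K] (t : Tab lam B)
    {C : Finset (Cell lam)} (hC : ∀ σ, ColPres lam σ →
      ∃ a ∈ C, ∃ b ∈ C, a ≠ b ∧ (σ a).1.1 = (σ b).1.1) :
    ∑ g ∈ univ.filter (fun g : Perm (Cell lam) => g.support ⊆ C),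
      (Perm.sign g : ℤ) • polytabloid K lam (permTab lam t g) = 0 := by
  simp_rw [polytabloid_eq_sum, smul_sum, permTab_permTab]
  rw [sum_comm]
  refine sum_eq_zero fun σ hσ => ?_
  obtain ⟨a, ha, b, hb, hab, hrow⟩ := hC σ (mem_filter.mp hσ).2
  refine Perm.sum_sign_smul_eq_zero_of_involution (swap a b * ·) (fun g hg => ?_)
    (fun g => swap_mul_self_mul a b g)
    (fun g => by rw [Perm.sign_mul, Perm.sign_swap hab, neg_one_mul]) _ (fun g _ => ?_)
  · refine mem_filter.mpr ⟨mem_univ _, (Perm.support_mul_le _ _).trans ?_⟩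
    rw [Perm.support_swap hab]
    exact union_subset (by rw [insert_subset_iff, singleton_subset_iff]; exact ⟨ha, hb⟩)
      (mem_filter.mp hg).2
  · rw [← mul_assoc, mul_swap_eq_swap_mul, mul_assoc, ← permTab_permTab,
      tabloid_permTab_of_rowPres K _ (apply_swap_eq_self (v := fun c : Cell lam => c.1.1) hrow)]

lemma exists_apply_mem_of_not_colPres {A C : Finset (Cell lam)} {ca cc : ℕ}
    (hA : ∀ c ∈ A, c.1.2 = ca) (hC : ∀ c ∈ C, c.1.2 = cc) {g : Perm (Cell lam)}
    (hg : g.support ⊆ A ∪ C) (hnc : ¬ ColPres lam g) : ∃ x ∈ A, g x ∈ C := by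
  by_contra! h
  have hmaps : Set.MapsTo g ↑A ↑A := fun c hc =>
    (mem_union.mp (Perm.apply_mem_of_support_subset hg (mem_union_left _ hc))).resolve_right
      (h c hc)
  have hcompl : Set.MapsTo g (↑A)ᶜ (↑A)ᶜ :=
    (((A.finite_toSet.injOn_iff_bijOn_of_mapsTo hmaps).mp g.injective.injOn).compl
      g.bijective).mapsTo
  refine hnc fun c => ?_
  by_cases hgc : g c = c
  · rw [hgc]
  have hc : c ∈ A ∪ C := hg (Perm.mem_support.mpr hgc)
  by_cases hcA : c ∈ A
  · rw [hA _ (hmaps hcA), hA _ hcA]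
  · rw [hC _ ((mem_union.mp (Perm.apply_mem_of_support_subset hg hc)).resolve_left
      (hcompl hcA)), hC _ ((mem_union.mp hc).resolve_left hcA)]

section Moments

variable {d : ℕ}

noncomputable def colMoment (t : Tab lam (Fin d)) : ℕ := ∑ c : Cell lam, c.1.2 * (t c : ℕ)

noncomputable def rowWeight (t : Tab lam (Fin d)) : ℕ := ∑ c : Cell lam, c.1.1 * (t c : ℕ)

lemma colMoment_permTab (t : Tab lam (Fin d)) (g : Perm (Cell lam)) :
    colMoment (permTab lam t g) = ∑ c, (g c).1.2 * (t c : ℕ) := by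
  rw [colMoment, ← Equiv.sum_comp g]
  simp [permTab]

lemma rowWeight_permTab (t : Tab lam (Fin d)) (g : Perm (Cell lam)) :
    rowWeight (permTab lam t g) = ∑ c, (g c).1.1 * (t c : ℕ) := by
  rw [rowWeight, ← Equiv.sum_comp g]
  simp [permTab]

lemma colMoment_permTab_of_colPres (t : Tab lam (Fin d)) {g : Perm (Cell lam)}
    (hg : ColPres lam g) : colMoment (permTab lam t g) = colMoment t := by
  rw [colMoment_permTab, colMoment]
  exact sum_congr rfl fun c _ => by rw [hg c]

lemma le_of_colsStrict {t : Tab lam (Fin d)} (ht : ColsStrict lam (· < ·) t) {a b : Cell lam}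
    (hcol : a.1.2 = b.1.2) (hrow : a.1.1 ≤ b.1.1) : t a ≤ t b := by
  rcases hrow.lt_or_eq with h | h
  · exact (ht a b hcol h).le
  · rw [cell_ext h hcol]

lemma antivaryOn_colBelow_union_colAbove {t : Tab lam (Fin d)} (hcs : ColsStrict lam (· < ·) t)
    {p q : Cell lam} (hcol : p.1.2 < q.1.2) (hdesc : t q < t p) :
    AntivaryOn (fun c : Cell lam => c.1.2) (fun c => (t c : ℕ))
      ↑(colBelow p ∪ colAbove q) := by
  intro a ha b hb hab
  dsimp only at hab ⊢
  have hA : ∀ a ∈ colBelow p, a.1.2 = p.1.2 ∧ t p ≤ t a := fun a ha => by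
    obtain ⟨hcol, hrow⟩ := (mem_filter.mp ha).2
    exact ⟨hcol, le_of_colsStrict hcs hcol.symm hrow⟩
  have hB : ∀ b ∈ colAbove q, b.1.2 = q.1.2 ∧ t b ≤ t q := fun b hb => by
    obtain ⟨hcol, hrow⟩ := (mem_filter.mp hb).2
    exact ⟨hcol, le_of_colsStrict hcs hcol hrow⟩
  rcases mem_union.mp ha with ha | ha <;> rcases mem_union.mp hb with hb | hb
  · rw [(hA a ha).1, (hA b hb).1]
  · exact absurd hab (not_lt.mpr (Fin.val_le_of_le
      ((hB b hb).2.trans (hdesc.trans_le (hA a ha).2).le)))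
  · rw [(hB a ha).1, (hA b hb).1]; exact hcol.le
  · rw [(hB a ha).1, (hB b hb).1]

/-- The rearrangement inequality: entries move from `colAbove q` to the column of `p` and
back, and those of `colAbove q` are the smaller ones. -/
lemma colMoment_lt_permTab {t : Tab lam (Fin d)} (hcs : ColsStrict lam (· < ·) t)
    {p q : Cell lam} (hcol : p.1.2 < q.1.2) (hdesc : t q < t p)
    {g : Perm (Cell lam)} (hg : g.support ⊆ colBelow p ∪ colAbove q) (hnc : ¬ ColPres lam g) :
    colMoment t < colMoment (permTab lam t g) := by
  set S := colBelow p ∪ colAbove q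
  have hcolA : ∀ c ∈ colBelow p, c.1.2 = p.1.2 := fun c hc => (mem_filter.mp hc).2.1
  have hcolB : ∀ c ∈ colAbove q, c.1.2 = q.1.2 := fun c hc => (mem_filter.mp hc).2.1
  obtain ⟨x, hx, hgx⟩ := exists_apply_mem_of_not_colPres hcolB hcolA (by rwa [union_comm]) hnc
  obtain ⟨y, hy, hgy⟩ := exists_apply_mem_of_not_colPres hcolA hcolB hg hnc
  have hnot : ¬ AntivaryOn ((fun c : Cell lam => c.1.2) ∘ g) (fun c => (t c : ℕ)) ↑S := by
    intro h
    have hxy : t x < t y := (le_of_colsStrict hcs (hcolB x hx) (mem_filter.mp hx).2.2).trans_lt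
      (hdesc.trans_le (le_of_colsStrict hcs (hcolA y hy).symm (mem_filter.mp hy).2.2))
    have := h (mem_union_right _ hx) (mem_union_left _ hy) (Fin.lt_def.mp hxy)
    simp only [Function.comp_apply, hcolA _ hgx, hcolB _ hgy] at this
    omega
  have hlt := ((antivaryOn_colBelow_union_colAbove hcs hcol hdesc).sum_mul_lt_sum_comp_perm_mul_iff
    fun c hc => hg (Perm.mem_support.mpr hc)).mpr hnot
  rw [colMoment, colMoment_permTab, ← sum_add_sum_compl S, ← sum_add_sum_compl S]
  have hout : ∑ c ∈ Sᶜ, (g c).1.2 * (t c : ℕ) = ∑ c ∈ Sᶜ, c.1.2 * (t c : ℕ) :=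
    sum_congr rfl fun c hc => by
      rw [Perm.notMem_support.mp fun h => mem_compl.mp hc (hg h)]
  rw [hout]
  exact Nat.add_lt_add_right hlt _

lemma polytabloid_mem_span_garnir (K : Type*) [Field K] [CharZero K] (hlam : IsPartition lam)
    {t : Tab lam (Fin d)} (hcs : ColsStrict lam (· < ·) t) {p q : Cell lam}
    (hrow : p.1.1 = q.1.1) (hcol : p.1.2 < q.1.2) (hdesc : t q < t p) :
    polytabloid K lam t ∈ Submodule.span K ((fun g => polytabloid K lam (permTab lam t g)) ''
      {g | colMoment t < colMoment (permTab lam t g)}) := by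
  set G := univ.filter fun g : Perm (Cell lam) => g.support ⊆ colBelow p ∪ colAbove q
  set f := fun g : Perm (Cell lam) => (Perm.sign g : ℤ) • polytabloid K lam (permTab lam t g)
  have hrel : ∑ g ∈ G, f g = 0 := sum_sign_smul_polytabloid_eq_zero K t fun σ hσ => by
    obtain ⟨a, ha, b, hb, h⟩ := exists_row_eq_of_colPres hlam hrow hcol hσ
    refine ⟨a, mem_union_left _ ha, b, mem_union_right _ hb, fun hab => ?_, h⟩
    have := (mem_filter.mp ha).2.1.symm.trans (congrArg (·.1.2) hab |>.trans
      (mem_filter.mp hb).2.1)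
    omega
  rw [← sum_filter_add_sum_filter_not G (ColPres lam)] at hrel
  have hcp :
      ∑ g ∈ G.filter (ColPres lam), f g = #(G.filter (ColPres lam)) • polytabloid K lam t := by
    rw [← sum_const]
    refine sum_congr rfl fun g hg => ?_
    dsimp only [f]
    rw [polytabloid_permTab K t (mem_filter.mp hg).2, smul_smul, ← Units.val_mul,
      Int.units_mul_self, Units.val_one, one_smul]
  have hne : (#(G.filter (ColPres lam)) : K) ≠ 0 :=
    Nat.cast_ne_zero.mpr (card_ne_zero_of_mem (a := 1) (mem_filter.mpr
      ⟨mem_filter.mpr ⟨mem_univ _, by rw [Perm.support_one]; exact empty_subset _⟩,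
        fun _ => rfl⟩))
  rw [← inv_smul_smul₀ hne (polytabloid K lam t), Nat.cast_smul_eq_nsmul, ← hcp,
    eq_neg_of_add_eq_zero_left hrel]
  refine Submodule.smul_mem _ _ (Submodule.neg_mem _ (Submodule.sum_mem _ fun g hg =>
    Submodule.smul_of_tower_mem _ _ (Submodule.subset_span ⟨g, ?_, rfl⟩)))
  exact colMoment_lt_permTab hcs hcol hdesc (mem_filter.mp (mem_filter.mp hg).1).2
    (mem_filter.mp hg).2

lemma rowWeight_lt_permTab_swap {t : Tab lam (Fin d)} {p q : Cell lam}
    (hrow : p.1.1 < q.1.1) (hdesc : t q < t p) :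
    rowWeight t < rowWeight (permTab lam t (swap p q)) := by
  have hpq : p ≠ q := by rintro rfl; exact lt_irrefl _ hrow
  have h := Fintype.sum_mul_comp_swap (fun c : Cell lam => c.1.1) (fun c => (t c : ℕ)) hpq
  have hd : (t q : ℕ) < t p := hdesc
  simp only [rowWeight, permTab, swap_inv]
  nlinarith

lemma rowWeight_permTab_add {u : Tab lam (Fin d)} (R : ℕ) {τ : Perm (Cell lam)}
    (hτ : ColPres lam τ) :
    rowWeight (permTab lam u τ) + (∑ c : Cell lam, c.1.1 * c.1.2 * d +
      ∑ c : Cell lam, c.1.2 * R * ((u c : ℕ) + c.1.2 * d)) =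
        ∑ c, ((τ c).1.1 + (τ c).1.2 * R) * ((u c : ℕ) + c.1.2 * d) := by
  have hcols : ∑ c : Cell lam, (τ c).1.1 * c.1.2 * d = ∑ c : Cell lam, c.1.1 * c.1.2 * d := by
    rw [← Equiv.sum_comp τ (fun c : Cell lam => c.1.1 * c.1.2 * d)]
    exact sum_congr rfl fun c _ => by rw [hτ c]
  rw [rowWeight_permTab, ← hcols, ← sum_add_distrib, ← sum_add_distrib]
  refine sum_congr rfl fun c _ => ?_
  rw [hτ c]
  ring

/-- Encoding cells by `(column, row)` and entries by `(column, value)`, the two monovary on the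
whole diagram, so the rearrangement inequality applies; the extra terms the encoding adds do
not depend on the column-preserving permutation. -/
lemma rowWeight_permTab_lt {u : Tab lam (Fin d)} (hu : ColsStrict lam (· < ·) u)
    {σ : Perm (Cell lam)} (hσ : ColPres lam σ) (hσ1 : σ ≠ 1) :
    rowWeight (permTab lam u σ) < rowWeight u := by
  set R := (univ.sup fun c : Cell lam => c.1.1) + 1
  have hR : ∀ c : Cell lam, c.1.1 < R :=
    fun c => Nat.lt_succ_of_le (le_sup (f := fun c : Cell lam => c.1.1) (mem_univ c))
  have hd : ∀ c : Cell lam, (u c : ℕ) < d := fun c => (u c).2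
  let F : Cell lam → ℕ := fun c => c.1.1 + c.1.2 * R
  let G : Cell lam → ℕ := fun c => (u c : ℕ) + c.1.2 * d
  have hF : Function.Injective F := fun a b h => by
    obtain ⟨h₁, h₂⟩ := Nat.eq_and_eq_of_add_mul_eq (hR a) (hR b) h
    exact cell_ext h₁ h₂
  have hG : Function.Injective G := fun a b h => by
    obtain ⟨h₁, h₂⟩ := Nat.eq_and_eq_of_add_mul_eq (hd a) (hd b) h
    rcases lt_trichotomy a.1.1 b.1.1 with hab | hab | hab
    · exact absurd (Fin.ext h₁) (hu a b h₂ hab).ne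
    · exact cell_ext hab h₂
    · exact absurd (Fin.ext h₁) (hu b a h₂.symm hab).ne'
  have hFG : Monovary F G := fun a b h => by
    rcases (Nat.add_mul_lt_add_mul_iff (hd a) (hd b)).mp h with hcol | ⟨hcol, hval⟩
    · exact ((Nat.add_mul_lt_add_mul_iff (hR a) (hR b)).mpr (Or.inl hcol)).le
    · have hrow : a.1.1 ≤ b.1.1 := not_lt.mp fun hrow =>
        (hu b a hcol.symm hrow).not_gt (Fin.lt_def.mpr hval)
      show a.1.1 + a.1.2 * R ≤ b.1.1 + b.1.2 * R
      rw [hcol]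
      omega
  have hlt := hFG.sum_comp_perm_mul_lt_sum_mul_iff.mpr
    fun h => hσ1 (hFG.eq_one_of_comp_perm hF hG h)
  have h₁ := rowWeight_permTab_add (u := u) R hσ
  have h₂ := rowWeight_permTab_add (u := u) R (τ := 1) fun _ => rfl
  simp only [Perm.one_apply, permTab_one] at h₂
  simp only [F, G] at hlt
  rw [← h₁, ← h₂] at hlt
  omega

end Moments

noncomputable def semistdSpan (K : Type*) [CommRing K] (lam : ℕ →₀ ℕ) {d : ℕ}
    (β : Fin d → ℕ) : Submodule K (SymMod lam (Fin d) K) :=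
  Submodule.span K (Set.range fun u : {u : Tab lam (Fin d) // IsSemistd lam u ∧ content u = β} =>
    polytabloid K lam u.1)

/-- Straightening, by well-founded induction: every polytabloid produced by a Garnir relation
or a column swap is larger for the lexicographic order on (column moment, row weight). -/
theorem polytabloid_mem_semistdSpan (K : Type*) [Field K] [CharZero K] {d : ℕ}
    (hlam : IsPartition lam) (t : Tab lam (Fin d)) :
    polytabloid K lam t ∈ semistdSpan K lam (content t) := by
  let key : Tab lam (Fin d) → ℕ ×ₗ ℕ := fun t => toLex (colMoment t, rowWeight t)
  let r : Tab lam (Fin d) → Tab lam (Fin d) → Prop := fun t' t => key t < key t'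
  have : IsTrans _ r := ⟨fun _ _ _ h₁ h₂ => h₂.trans h₁⟩
  have : Std.Irrefl r := ⟨fun _ => lt_irrefl _⟩
  induction t using (Finite.wellFounded_of_trans_of_irrefl r).induction with | _ t ih =>
  have hstep : ∀ t', key t < key t' → content t' = content t →
      polytabloid K lam t' ∈ semistdSpan K lam (content t) := fun t' h hc => hc ▸ ih t' h
  by_cases hcs : ColsStrict lam (· < ·) t
  · by_cases hrw : RowsWeak lam (· ≤ ·) t
    · exact Submodule.subset_span ⟨⟨t, ⟨hrw, hcs⟩, rfl⟩, rfl⟩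
    obtain ⟨p, q, hrow, hcol, hdesc⟩ :
        ∃ p q : Cell lam, p.1.1 = q.1.1 ∧ p.1.2 ≤ q.1.2 ∧ t q < t p := by
      simpa [RowsWeak] using hrw
    have hcol' : p.1.2 < q.1.2 := hcol.lt_of_ne fun h => by
      rw [cell_ext hrow h] at hdesc; exact lt_irrefl _ hdesc
    refine Submodule.span_le.mpr ?_ (polytabloid_mem_span_garnir K hlam hcs hrow hcol' hdesc)
    rintro _ ⟨g, hg, rfl⟩
    exact hstep _ (Prod.Lex.toLex_lt_toLex.mpr (Or.inl hg)) (content_permTab t g)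
  · obtain ⟨p, q, hcol, hrow, hle⟩ :
        ∃ p q : Cell lam, p.1.2 = q.1.2 ∧ p.1.1 < q.1.1 ∧ t q ≤ t p := by
      simpa [ColsStrict] using hcs
    have hpq : p ≠ q := by rintro rfl; exact lt_irrefl _ hrow
    rcases hle.lt_or_eq with hdesc | heq
    · have hswap := polytabloid_permTab K t (colPres_swap hcol)
      rw [Perm.sign_swap hpq, Units.val_neg, Units.val_one, neg_one_smul] at hswap
      rw [← neg_neg (polytabloid K lam t), ← hswap]
      refine Submodule.neg_mem _ (hstep _ (Prod.Lex.toLex_lt_toLex.mpr (Or.inr ⟨?_, ?_⟩))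
        (content_permTab t _))
      · exact (colMoment_permTab_of_colPres t (colPres_swap hcol)).symm
      · exact rowWeight_lt_permTab_swap hrow hdesc
    · rw [polytabloid_eq_zero_of_eq K t hpq hcol heq.symm]
      exact Submodule.zero_mem _

section Independence

variable {d : ℕ}

noncomputable def tabloidWeight (r : RowData lam (Fin d)) : ℕ :=
  ∑ i ∈ lam.support, i * ((r i).1.map fun b : Fin d => (b : ℕ)).sum

lemma tabloidWeight_rowData (t : Tab lam (Fin d)) :
    tabloidWeight (rowData lam t) = rowWeight t := by
  rw [rowWeight, ← sum_fiberwise_of_maps_to (g := fun c : Cell lam => c.1.1) (t := lam.support)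
    fun c _ => Finsupp.mem_support_iff.mpr (Nat.ne_zero_of_lt (mem_cells.mp c.2))]
  refine sum_congr rfl fun i _ => ?_
  rw [rowData_eq, Multiset.map_map, sum_map_val, mul_sum]
  exact sum_congr rfl fun c hc => by rw [(mem_filter.mp hc).2]; rfl

theorem linearIndependent_polytabloid (K : Type*) [CommRing K] :
    LinearIndependent K (fun u : {u : Tab lam (Fin d) // IsSemistd lam u} =>
      polytabloid K lam u.1) := by
  refine linearIndependent_of_leading _ (fun u => rowData lam u.1) tabloidWeight
    (fun u v h => Subtype.ext (eq_of_rowData_eq u.2.1 v.2.1 h)) (fun u => ?_)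
    (fun u r hr hne => ?_)
  · have hone : (univ.filter fun σ => ColPres lam σ ∧
        rowData lam (permTab lam u.1 σ) = rowData lam u.1) = {1} := by
      ext σ
      simp only [mem_filter, mem_univ, true_and, mem_singleton]
      refine ⟨fun ⟨hσ, h⟩ => by_contra fun hσ1 =>
        (rowWeight_permTab_lt u.2.2 hσ hσ1).ne ?_, by rintro rfl; exact ⟨fun _ => rfl, rfl⟩⟩
      rw [← tabloidWeight_rowData, h, tabloidWeight_rowData]
    rw [polytabloid_apply, hone, sum_singleton, Perm.sign_one, Units.val_one, Int.cast_one]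
    exact isUnit_one
  · rw [polytabloid_apply] at hr
    obtain ⟨σ, hσ, -⟩ := exists_ne_zero_of_sum_ne_zero hr
    obtain ⟨hcp, rfl⟩ := (mem_filter.mp hσ).2
    have hσ1 : σ ≠ 1 := by rintro rfl; exact hne rfl
    rw [tabloidWeight_rowData, tabloidWeight_rowData]
    exact rowWeight_permTab_lt u.2.2 hcp hσ1

end Independence

section WeightSpaces

variable {d : ℕ}

lemma diagActL_apply (z : Fin d → ℂ) (v : SymMod lam (Fin d) ℂ) (r : RowData lam (Fin d)) :
    diagActL lam d z v r = (∏ b, z b ^ rdCount lam r b) * v r := by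
  simp [diagActL, Finsupp.sum_apply, Finsupp.single_apply]
  exact Or.inr

/-- Testing against `z = (1, …, 1, 2, 1, …, 1)` isolates the exponent of a single variable. -/
lemma iInf_eqLocus_diagActL (β : Fin d → ℕ) :
    (⨅ z : {z : Fin d → ℂ // ∀ i, z i ≠ 0},
      LinearMap.eqLocus (diagActL lam d z.1) ((∏ i : Fin d, z.1 i ^ β i) • LinearMap.id)) =
      Finsupp.supported ℂ ℂ {r | rdCount lam r = β} := by
  ext v
  simp only [Submodule.mem_iInf, LinearMap.mem_eqLocus, Finsupp.mem_supported']
  constructor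
  · intro hv r hr
    by_contra hvr
    apply hr
    funext b₀
    have h := congrArg (· r) (hv ⟨fun b => if b = b₀ then 2 else 1,
      fun b => by dsimp only; split_ifs <;> norm_num⟩)
    simp only [diagActL_apply, LinearMap.smul_apply, LinearMap.id_apply, Finsupp.smul_apply,
      smul_eq_mul, ite_pow, one_pow, prod_ite_eq', mem_univ, if_true] at h
    have h2 : ((2 ^ rdCount lam r b₀ : ℕ) : ℂ) = ((2 ^ β b₀ : ℕ) : ℂ) := by
      push_cast; exact mul_right_cancel₀ hvr h
    exact Nat.pow_right_injective le_rfl (Nat.cast_injective h2)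
  · intro hv z
    ext r
    rw [diagActL_apply, LinearMap.smul_apply, LinearMap.id_apply, Finsupp.smul_apply, smul_eq_mul]
    by_cases hr : rdCount lam r = β
    · rw [hr]
    · rw [hv r hr, mul_zero, mul_zero]

theorem weightSpace_eq_semistdSpan (hlam : IsPartition lam) (β : Fin d → ℕ) :
    weightSpace lam d β = semistdSpan ℂ lam β := by
  rw [weightSpace, iInf_eqLocus_diagActL]
  apply le_antisymm
  · rintro v ⟨hv, hβ⟩
    set S : Set (RowData lam (Fin d)) := {r | rdCount lam r = β}
    rw [← (Finsupp.filter_eq_self_iff (· ∈ S) v).mpr fun r hr => by_contra fun h =>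
      hr ((Finsupp.mem_supported' ℂ v).mp hβ r h)]
    clear hβ
    induction hv using Submodule.span_induction with
    | mem _ h =>
      obtain ⟨t, rfl⟩ := h
      by_cases ht : content t = β
      · rw [(Finsupp.filter_eq_self_iff (· ∈ S) _).mpr fun r hr => by_contra fun h =>
          hr (polytabloid_apply_eq_zero (ht ▸ h))]
        exact ht ▸ polytabloid_mem_semistdSpan ℂ hlam t
      · rw [(Finsupp.filter_eq_zero_iff (· ∈ S) _).mpr fun r hr => polytabloid_apply_eq_zero
          fun h => ht (h ▸ hr)]
        exact Submodule.zero_mem _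
    | zero => rw [Finsupp.filter_zero]; exact Submodule.zero_mem _
    | add x y _ _ hx hy => rw [Finsupp.filter_add]; exact Submodule.add_mem _ hx hy
    | smul a x _ hx => rw [Finsupp.filter_smul]; exact Submodule.smul_mem _ a hx
  · refine Submodule.span_le.mpr ?_
    rintro _ ⟨u, rfl⟩
    refine ⟨Submodule.subset_span ⟨u.1, rfl⟩, (Finsupp.mem_supported' ℂ _).mpr fun r hr =>
      polytabloid_apply_eq_zero fun h => hr (h.trans u.2.2)⟩

theorem finrank_weightSpace (hlam : IsPartition lam) (β : Fin d → ℕ) :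
    Module.finrank ℂ (weightSpace lam d β) =
      #{u : Tab lam (Fin d) | IsSemistd lam u ∧ content u = β} := by
  have hli := (linearIndependent_polytabloid (lam := lam) (d := d) ℂ).comp
    (fun u : {u : Tab lam (Fin d) // IsSemistd lam u ∧ content u = β} =>
      (⟨u.1, u.2.1⟩ : {u : Tab lam (Fin d) // IsSemistd lam u}))
    fun _ _ h => Subtype.ext (Subtype.ext_iff.mp h :)
  rw [Function.comp_def] at hli
  rw [weightSpace_eq_semistdSpan hlam, semistdSpan, finrank_span_eq_card hli,
    Fintype.card_subtype]

end WeightSpaces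

open MvPolynomial

/-- **Lemma (character of `∇^lam`).**
Let `E = ℂ^d` with its standard basis, regarded as the natural representation of
`GL_d(ℂ)`, and let `lam` be a partition.  Then the formal character of the
`GL_d(ℂ)`-representation `∇^lam (E) ⊆ Sym^lam E` equals the Schur polynomial
`s_lam (x_0, …, x_{d-1})`. -/
theorem formalChar_eq_schurPoly (d : ℕ) (lam : ℕ →₀ ℕ) (hlam : IsPartition lam) :
    formalChar lam d = schurPoly lam d := by
  set S := univ.filter (IsSemistd lam : Tab lam (Fin d) → Prop)
  have hsupp : (Function.support fun β : Fin d → ℕ =>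
      (Module.finrank ℂ (weightSpace lam d β) : MvPolynomial (Fin d) ℂ) * ∏ i, X i ^ β i) ⊆
        S.image content := by
    intro β hβ
    rw [Function.mem_support, finrank_weightSpace hlam] at hβ
    obtain ⟨u, hu⟩ := card_ne_zero.mp fun h => hβ (by rw [h, Nat.cast_zero, zero_mul])
    rw [mem_filter] at hu
    exact mem_image.mpr ⟨u, mem_filter.mpr ⟨mem_univ _, hu.2.1⟩, hu.2.2⟩
  rw [formalChar, finsum_eq_sum_of_support_subset _ hsupp, schurPoly, ← sum_filter]
  simp_rw [prod_comp_eq_prod_pow_content X]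
  rw [sum_comp (fun β : Fin d → ℕ => ∏ b, X b ^ β b) content]
  refine sum_congr rfl fun β _ => ?_
  rw [finrank_weightSpace hlam, filter_filter, nsmul_eq_mul]

end Pleth
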